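/- Every cm-monoid is either of type 1 or of type 2; that is, either a[k] = 1 for every element a and every k ∈ ω, or 1[k] ≠ 1[j] for all k ≠ j. -/

import Mathlib

universe u

open scoped Classical

/-- A finite permutation of ω: an element of S_ω, i.e. a permutation moving
only finitely many points. -/
def FinPerm (σ : Equiv.Perm ℕ) : Prop := {n : ℕ | σ n ≠ n}.Finite

/-- The raw operations of a merge algebra: the binary merges `⋆_n` and the
actions `σ̄` of (finite) permutations. -/
structure MergeOps (A : Type u) where
  star : ℕ → A → A → A
  bar : Equiv.Perm ℕ → A → A

namespace MergeOps

variable {A : Type u}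

/-- `chain g k = ((g 0 ⋆_1 g 1) ⋆_2 g 2) … ⋆_k (g k)`. -/
def chain (M : MergeOps A) (g : ℕ → A) : ℕ → A
  | 0 => g 0
  | i + 1 => M.star (i + 1) (M.chain g i) (g (i + 1))

/-- `chainStar g k y = ((…(g 0 ⋆_1 g 1) ⋆_2 …) ⋆_{k-1} g (k-1)) ⋆_k y`. -/
def chainStar (M : MergeOps A) (g : ℕ → A) (k : ℕ) (y : A) : A :=
  match k with
  | 0 => y
  | k + 1 => M.star (k + 1) (M.chain g k) y

/-- The `n`-coordinate of `x` relative to the coordinator `pt`: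
`x[n] = τ̄^n_0(x) ⋆_1 pt`. -/
def coord (M : MergeOps A) (pt x : A) (n : ℕ) : A :=
  M.star 1 (M.bar (Equiv.swap 0 n) x) pt

end MergeOps

/-- A merge algebra: operations `⋆_n` and `σ̄` satisfying axioms (B1)–(B7). -/
structure MergeAlgebra (A : Type u) extends MergeOps A where
  /-- (B1) each `⋆_n` is associative -/
  star_assoc : ∀ (n : ℕ) (x y z : A), star n (star n x y) z = star n x (star n y z)
  /-- (B1) each `⋆_n` is idempotent -/
  star_idem : ∀ (n : ℕ) (x : A), star n x x = x
  /-- (B2) -/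
  star_zero : ∀ x y : A, star 0 x y = y
  /-- (B3), first part (k ≥ n) -/
  B3a : ∀ {n k : ℕ}, n ≤ k → ∀ x y z : A, star n (star k x y) z = star n x z
  /-- (B3), second part (k ≥ n) -/
  B3b : ∀ {n k : ℕ}, n ≤ k → ∀ x y z : A, star k x (star n y z) = star k x z
  /-- (B4) (k < n) -/
  B4 : ∀ {n k : ℕ}, k < n → ∀ x y z : A, star n (star k x y) z = star k x (star n y z)
  /-- (B5) `σ̄(τ̄(x)) = (τ∘σ)‾(x)` -/
  B5 : ∀ σ τ : Equiv.Perm ℕ, FinPerm σ → FinPerm τ → ∀ x : A,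
      bar σ (bar τ x) = bar (τ * σ) x
  /-- (B5) `ῑ(x) = x` -/
  bar_id : ∀ x : A, bar 1 x = x
  /-- (B6): for `n ≤ k` and `σ` a permutation of `k`, with `f i = x` iff `σ i < n`:
  `σ̄(x ⋆_n y) = ((…(σ̄(f 0) ⋆_1 σ̄(f 1)) ⋆_2 …) ⋆_{k-1} σ̄(f (k-1))) ⋆_k y`. -/
  B6 : ∀ {n k : ℕ}, n ≤ k → ∀ σ : Equiv.Perm ℕ, (∀ i, k ≤ i → σ i = i) →
      ∀ x y : A, bar σ (star n x y) =
        toMergeOps.chainStar (fun i => bar σ (if σ i < n then x else y)) k y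
  /-- (B7) -/
  B7 : ∀ {m n : ℕ} (σ τ : Equiv.Perm ℕ), FinPerm σ → FinPerm τ →
      (∀ i, m ≤ i → i < n → σ i = τ i) →
      ∀ x y z : A, star n (star m z (bar σ x)) y = star n (star m z (bar τ x)) y

/-- An m-monoid: a monoid structure together with a merge algebra structure on
the same carrier, satisfying right distributivity (L1). -/
structure MMonoid (A : Type u) extends MergeAlgebra A where
  mul : A → A → A
  one : A
  mul_assoc : ∀ x y z : A, mul (mul x y) z = mul x (mul y z)
  one_mul : ∀ x : A, mul one x = x
  mul_one : ∀ x : A, mul x one = x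
  /-- (L1) right distributivity -/
  L1 : ∀ (n : ℕ) (x y z : A), mul (star n x y) z = star n (mul x z) (mul y z)

namespace MMonoid

variable {A : Type u} (M : MMonoid A)

/-- A cm-monoid is an m-monoid satisfying (L2): `σ̄(x)·y = σ̄(x·y)`. -/
def IsCM : Prop :=
  ∀ σ : Equiv.Perm ℕ, FinPerm σ → ∀ x y : A, M.mul (M.bar σ x) y = M.bar σ (M.mul x y)

/-- An am-monoid is an m-monoid satisfying (L3): `σ̄(x·y) = σ̄(x)·σ̄(y)`. -/
def IsAM : Prop :=
  ∀ σ : Equiv.Perm ℕ, FinPerm σ → ∀ x y : A, M.bar σ (M.mul x y) = M.mul (M.bar σ x) (M.bar σ y)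

/-- The `n`-coordinate `x[n] = τ̄^n_0(x) ⋆_1 1` (the coordinator is the unit). -/
def coord (x : A) (n : ℕ) : A := M.toMergeOps.coord M.one x n

/-- Extensionality: elements with the same coordinates are equal. -/
def Extensional : Prop := ∀ x y : A, (∀ n : ℕ, M.coord x n = M.coord y n) → x = y

/-- An element has rank ≤ n iff `x ⋆_n 1 = x`; the m-monoid is finitely ranked
if every element has finite rank. -/
def FinitelyRanked : Prop := ∀ x : A, ∃ n : ℕ, M.star n x M.one = x

/-- A degenerate m-monoid. -/
def Degenerate : Prop :=
  (∀ σ : Equiv.Perm ℕ, FinPerm σ → ∀ x : A, M.bar σ x = x) ∧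
    (∀ (n : ℕ) (x y : A), M.star n x y = y)

/-- `a` is finite dimensional: for every `n` there is `m` with
`(a·(1 ⋆_m b ⋆_{m+k} 1)) ⋆_n a = a` for all `b` and `k`. -/
def FinDimEl (a : A) : Prop :=
  ∀ n : ℕ, ∃ m : ℕ, ∀ (b : A) (k : ℕ),
    M.star n (M.mul a (M.star (m + k) (M.star m M.one b) M.one)) a = a

/-- `a` is ω-finite dimensional: for every `n` there is `m` with
`(a·(1 ⋆_m b)) ⋆_n a = a` for all `b`. -/
def OmegaFinDimEl (a : A) : Prop :=
  ∀ n : ℕ, ∃ m : ℕ, ∀ b : A,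
    M.star n (M.mul a (M.star m M.one b)) a = a

/-- An m-monoid is finite dimensional if every element is. -/
def FinDim : Prop := ∀ a : A, M.FinDimEl a

/-- An m-monoid is ω-finite dimensional if every element is. -/
def OmegaFinDim : Prop := ∀ a : A, M.OmegaFinDimEl a

end MMonoid

/-!
By (B7) the coordinate `x[n] = τ̄^n_0(x) ⋆_1 1` depends only on where the permutation sends `0`,
so `(π̄ x)[p] = x[π p]`: finite permutations permute coordinates. In a cm-monoid (L1) and (L2)
give `a[n] = (1[n] · a)[0]`, so a single coincidence `1[k] = 1[j]` with `k ≠ j` forces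
`a[k] = a[j]` for every `a`, and transporting along permutations makes all coordinates of every
element equal. Finally (B6) gives `(a ⋆_1 1)[1] = 1[1]`, hence
`a[0] = (a ⋆_1 1)[0] = (a ⋆_1 1)[1] = 1[1] = 1[0] = 1`.
-/

namespace FinPerm

lemma swap (a b : ℕ) : FinPerm (Equiv.swap a b) :=
  ((Set.finite_singleton b).insert a).subset fun n hn => by
    by_contra h
    simp only [Set.mem_insert_iff, Set.mem_singleton_iff, not_or] at h
    exact hn (Equiv.swap_apply_of_ne_of_ne h.1 h.2)

lemma mul {σ τ : Equiv.Perm ℕ} (hσ : FinPerm σ) (hτ : FinPerm τ) : FinPerm (σ * τ) :=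
  (hσ.union hτ).subset fun n hn => by
    by_contra h
    simp only [Set.mem_union, Set.mem_ofPred_eq, not_or, not_not] at h
    exact hn (by rw [Equiv.Perm.mul_apply, h.2, h.1])

lemma exists_apply_eq_and_apply_eq {k j m n : ℕ} (hkj : k ≠ j) (hmn : m ≠ n) :
    ∃ π : Equiv.Perm ℕ, FinPerm π ∧ π k = m ∧ π j = n := by
  have hjm : Equiv.swap k m j ≠ m := fun h =>
    hkj ((Equiv.swap k m).injective (h.trans (Equiv.swap_apply_left k m).symm)).symm
  refine ⟨Equiv.swap (Equiv.swap k m j) n * Equiv.swap k m, (swap _ _).mul (swap _ _), ?_, ?_⟩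
  · rw [Equiv.Perm.mul_apply, Equiv.swap_apply_left]
    exact Equiv.swap_apply_of_ne_of_ne hjm.symm hmn
  · exact Equiv.swap_apply_left _ _

end FinPerm

namespace MergeAlgebra

variable {A : Type u} (M : MergeAlgebra A)

lemma star_one_bar_congr {ρ ρ' : Equiv.Perm ℕ} (hρ : FinPerm ρ) (hρ' : FinPerm ρ')
    (h0 : ρ 0 = ρ' 0) (x c : A) : M.star 1 (M.bar ρ x) c = M.star 1 (M.bar ρ' x) c := by
  simpa only [M.star_zero] using
    M.B7 (m := 0) (n := 1) ρ ρ' hρ hρ' (fun i _ hi => by rwa [Nat.lt_one_iff.mp hi]) x c c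

lemma coord_bar {π : Equiv.Perm ℕ} (hπ : FinPerm π) (c x : A) (p : ℕ) :
    M.coord c (M.bar π x) p = M.coord c x (π p) := by
  unfold MergeOps.coord
  rw [M.B5 _ π (FinPerm.swap 0 p) hπ]
  exact M.star_one_bar_congr (hπ.mul (FinPerm.swap 0 p)) (FinPerm.swap 0 (π p))
    (by simp) x c

lemma coord_zero (c x : A) : M.coord c x 0 = M.star 1 x c := by
  rw [MergeOps.coord, Equiv.swap_self, ← Equiv.Perm.one_def, M.bar_id]

lemma coord_star_one_zero (c x : A) : M.coord c (M.star 1 x c) 0 = M.coord c x 0 := by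
  rw [M.coord_zero, M.coord_zero, M.B3a le_rfl]

lemma coord_star_one_one (c x : A) : M.coord c (M.star 1 x c) 1 = M.coord c c 1 := by
  have hB6 := M.B6 (n := 1) (k := 2) one_le_two (Equiv.swap 0 1)
    (fun i hi => Equiv.swap_apply_of_ne_of_ne (by omega) (by omega)) x c
  simp only [MergeOps.chainStar, MergeOps.chain, Equiv.swap_apply_left, Equiv.swap_apply_right,
    Nat.lt_irrefl, Nat.zero_lt_one, if_false, if_true, Nat.reduceAdd] at hB6
  rw [MergeOps.coord, hB6, M.B3a one_le_two, M.B3a le_rfl, MergeOps.coord]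

lemma coord_eq_coord_of_forall_coord_eq {c : A} {k j : ℕ} (hkj : k ≠ j)
    (h : ∀ a, M.coord c a k = M.coord c a j) (x : A) (m n : ℕ) :
    M.coord c x m = M.coord c x n := by
  rcases eq_or_ne m n with rfl | hmn
  · rfl
  obtain ⟨π, hπ, hπk, hπj⟩ := FinPerm.exists_apply_eq_and_apply_eq hkj hmn
  have := h (M.bar π x)
  rwa [M.coord_bar hπ, M.coord_bar hπ, hπk, hπj] at this

lemma coord_eq_self_of_forall_coord_eq {c : A} (h : ∀ a m n, M.coord c a m = M.coord c a n)
    (x : A) (n : ℕ) : M.coord c x n = c :=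
  calc M.coord c x n = M.coord c (M.star 1 x c) 0 := by rw [h x n 0, M.coord_star_one_zero]
    _ = M.coord c (M.star 1 x c) 1 := h _ 0 1
    _ = M.coord c c 0 := by rw [M.coord_star_one_one, h c 1 0]
    _ = c := by rw [M.coord_zero, M.star_idem]

end MergeAlgebra

namespace MMonoid

variable {A : Type u} (M : MMonoid A)

lemma coord_eq_coord_zero_coord_one_mul (hcm : M.IsCM) (a : A) (n : ℕ) :
    M.coord a n = M.coord (M.mul (M.coord M.one n) a) 0 := by
  have hmul : M.mul (M.coord M.one n) a = M.star 1 (M.bar (Equiv.swap 0 n) a) a := by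
    rw [coord, MergeOps.coord, M.L1, M.one_mul, hcm _ (FinPerm.swap 0 n), M.one_mul]
  rw [coord, coord, M.toMergeAlgebra.coord_zero, hmul, M.B3a le_rfl, MergeOps.coord]

end MMonoid

/-- STATEMENT 8: every cm-monoid is either of type 1 (`a[k] = 1` for every
element `a` and every `k`) or of type 2 (`1[k] ≠ 1[j]` for all `k ≠ j`). -/
theorem cm_type1_or_type2 {A : Type u} (M : MMonoid A) (hcm : M.IsCM) :
    (∀ (a : A) (k : ℕ), M.coord a k = M.one) ∨
      (∀ k j : ℕ, k ≠ j → M.coord M.one k ≠ M.coord M.one j) := by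
  by_cases htype2 : ∀ k j : ℕ, k ≠ j → M.coord M.one k ≠ M.coord M.one j
  · exact Or.inr htype2
  push Not at htype2
  obtain ⟨k, j, hkj, hone⟩ := htype2
  have hkj_coord : ∀ a, M.coord a k = M.coord a j := fun a => by
    rw [M.coord_eq_coord_zero_coord_one_mul hcm, M.coord_eq_coord_zero_coord_one_mul hcm a j,
      hone]
  exact Or.inl (M.toMergeAlgebra.coord_eq_self_of_forall_coord_eq
    (M.toMergeAlgebra.coord_eq_coord_of_forall_coord_eq hkj hkj_coord))
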